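/- arXiv:1409.8556 — 6 statements merged into one kernel-verified Lean document; each statement's English description precedes it below -/
import Mathlib

section
/- There is a constant C > 0, depending only on d and s, such that for every locally finite Borel measure ν on ℝ^d, every x ∈ ℝ^d, and all r, R > 0, one has ∫_{B(x,r)} ∫_{B(y,R)} |z−y|^{−s} dν(z) dm_d(y) ≤ C · min(r,R)^{d−s} · ν(B(x, r+R)), where m_d is d-dimensional Lebesgue measure. -/
/-!
By Tonelli, the double integral equals `∫_{B(x,r+R)} ∫_{B(z,R) ∩ B(x,r)} |z-y|^{-s} dy dν(z)`,
and the inner domain lies in a ball of radius `m = min r R`. On `B(z,m)` the kernel integrates,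
by translation and scaling, to `m^{d-s}` times its integral over the unit ball, which is finite
since `s < d`; off `B(z,m)` the kernel is at most `m^{-s}` on a set of volume at most
`m^d |B(0,1)|`.
-/

open MeasureTheory Metric Set Module

section RieszKernel

variable {E : Type*} [NormedAddCommGroup E] [NormedSpace ℝ E] [FiniteDimensional ℝ E]
  [MeasurableSpace E] [BorelSpace E] (μ : Measure E) [μ.IsAddHaarMeasure]

lemma setLIntegral_ball_zero_comp_smul {ρ : ℝ} (hρ : 0 < ρ) {f : E → ENNReal} (hf : Measurable f) :
    ∫⁻ u in ball 0 ρ, f u ∂μ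
      = ENNReal.ofReal (ρ ^ finrank ℝ E) * ∫⁻ u in ball 0 1, f (ρ • u) ∂μ := by
  have hpre : (ρ • ·) ⁻¹' ball (0 : E) ρ = ball 0 1 := by
    ext u
    simp [norm_smul, abs_of_pos hρ, hρ]
  rw [← hpre, ← setLIntegral_map measurableSet_ball hf (measurable_const_smul ρ),
    Measure.map_addHaar_smul μ hρ.ne', Measure.restrict_smul, lintegral_smul_measure, smul_eq_mul,
    ← mul_assoc, abs_of_pos (by positivity), ← ENNReal.ofReal_mul (by positivity),
    mul_inv_cancel₀ (by positivity), ENNReal.ofReal_one, one_mul]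

lemma lintegral_ball_inv_norm_sub_rpow (z : E) {ρ : ℝ} (hρ : 0 < ρ) (s : ℝ) :
    ∫⁻ y in ball z ρ, ENNReal.ofReal ((‖z - y‖ ^ s)⁻¹) ∂μ
      = ENNReal.ofReal (ρ ^ ((finrank ℝ E : ℝ) - s))
        * ∫⁻ u in ball 0 1, ENNReal.ofReal ((‖u‖ ^ s)⁻¹) ∂μ := by
  have hpre : (· - z) ⁻¹' ball (0 : E) ρ = ball z ρ := by
    ext y
    simp [dist_eq_norm]
  have hmeas : Measurable fun u : E => ENNReal.ofReal ((‖u‖ ^ s)⁻¹) := by fun_prop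
  simp_rw [norm_sub_rev z]
  rw [← hpre, (measurePreserving_sub_right μ z).setLIntegral_comp_preimage_emb
    (measurableEmbedding_subRight z) (fun u => ENNReal.ofReal ((‖u‖ ^ s)⁻¹)),
    setLIntegral_ball_zero_comp_smul μ hρ hmeas]
  have hscale (u : E) : ENNReal.ofReal ((‖ρ • u‖ ^ s)⁻¹)
      = ENNReal.ofReal ((ρ ^ s)⁻¹) * ENNReal.ofReal ((‖u‖ ^ s)⁻¹) := by
    rw [norm_smul, Real.norm_of_nonneg hρ.le, Real.mul_rpow hρ.le (norm_nonneg u), mul_inv,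
      ENNReal.ofReal_mul (by positivity)]
  simp_rw [hscale]
  rw [lintegral_const_mul' _ _ ENNReal.ofReal_ne_top, ← mul_assoc,
    ← ENNReal.ofReal_mul (by positivity), Real.rpow_sub hρ, Real.rpow_natCast, div_eq_mul_inv]

lemma lintegral_unitBall_inv_norm_rpow_lt_top (hd : 1 ≤ finrank ℝ E) {s : ℝ}
    (hsd : s < finrank ℝ E) :
    ∫⁻ u in ball 0 1, ENNReal.ofReal ((‖u‖ ^ s)⁻¹) ∂μ < ⊤ := by
  refine Integrable.lintegral_lt_top (integrableOn_ball_of_norm_le_rpow (C := 1) hd hsd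
    (Filter.Eventually.of_forall fun u => ?_)
    (by fun_prop : Measurable fun u : E => (‖u‖ ^ s)⁻¹).aestronglyMeasurable)
  rw [Real.norm_of_nonneg (by positivity), one_mul, Real.rpow_neg (norm_nonneg u)]

lemma ofReal_pow_mul_ofReal_inv_rpow {ρ : ℝ} (hρ : 0 < ρ) (n : ℕ) (s : ℝ) :
    ENNReal.ofReal (ρ ^ n) * ENNReal.ofReal ((ρ ^ s)⁻¹) = ENNReal.ofReal (ρ ^ ((n : ℝ) - s)) := by
  rw [← ENNReal.ofReal_mul (by positivity), Real.rpow_sub hρ, Real.rpow_natCast, div_eq_mul_inv]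

lemma setLIntegral_ball_inv_norm_sub_rpow_le (c z : E) {m s : ℝ} (hm : 0 < m) (hs : 0 ≤ s) :
    ∫⁻ y in ball c m, ENNReal.ofReal ((‖z - y‖ ^ s)⁻¹) ∂μ
      ≤ (∫⁻ u in ball 0 1, ENNReal.ofReal ((‖u‖ ^ s)⁻¹) ∂μ + μ (ball 0 1))
        * ENNReal.ofReal (m ^ ((finrank ℝ E : ℝ) - s)) := by
  have hfar : ∀ y ∈ ball c m \ ball z m,
      ENNReal.ofReal ((‖z - y‖ ^ s)⁻¹) ≤ ENNReal.ofReal ((m ^ s)⁻¹) := by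
    rintro y ⟨-, hy⟩
    rw [mem_ball, not_lt, dist_eq_norm, norm_sub_rev] at hy
    gcongr
  calc ∫⁻ y in ball c m, ENNReal.ofReal ((‖z - y‖ ^ s)⁻¹) ∂μ
      ≤ ∫⁻ y in ball z m ∪ (ball c m \ ball z m), ENNReal.ofReal ((‖z - y‖ ^ s)⁻¹) ∂μ :=
        lintegral_mono_set fun y hy => by by_cases h : y ∈ ball z m <;> simp [h, hy]
    _ ≤ ∫⁻ y in ball z m, ENNReal.ofReal ((‖z - y‖ ^ s)⁻¹) ∂μ
        + ∫⁻ y in ball c m \ ball z m, ENNReal.ofReal ((‖z - y‖ ^ s)⁻¹) ∂μ :=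
        lintegral_union_le _ _ _
    _ ≤ ENNReal.ofReal (m ^ ((finrank ℝ E : ℝ) - s))
          * ∫⁻ u in ball 0 1, ENNReal.ofReal ((‖u‖ ^ s)⁻¹) ∂μ
        + ENNReal.ofReal ((m ^ s)⁻¹) * μ (ball c m) := by
        rw [lintegral_ball_inv_norm_sub_rpow μ z hm s, ← setLIntegral_const]
        gcongr 1
        calc _ ≤ ∫⁻ _ in ball c m \ ball z m, ENNReal.ofReal ((m ^ s)⁻¹) ∂μ :=
              setLIntegral_mono' (measurableSet_ball.diff measurableSet_ball) hfar
          _ ≤ _ := lintegral_mono_set sdiff_subset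
    _ = _ := by
        rw [Measure.addHaar_ball_of_pos μ c hm, mul_comm (ENNReal.ofReal (m ^ s)⁻¹), mul_assoc,
          mul_comm (μ _), ← mul_assoc, ofReal_pow_mul_ofReal_inv_rpow hm]
        ring

end RieszKernel

section DoubleIntegral

variable {X : Type*} [PseudoMetricSpace X] [SecondCountableTopology X] [MeasurableSpace X]
  [BorelSpace X] {μ ν : Measure X} [SFinite μ] [SFinite ν]

lemma lintegral_ball_lintegral_ball_le {g : X → X → ENNReal} (hg : Measurable (Function.uncurry g))
    (x : X) {r R : ℝ} {B : ENNReal} (hB : ∀ z, ∫⁻ y in ball z R ∩ ball x r, g y z ∂μ ≤ B) :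
    ∫⁻ y in ball x r, ∫⁻ z in ball y R, g y z ∂ν ∂μ ≤ B * ν (ball x (r + R)) := by
  have hmeas : Measurable (Function.uncurry fun y z => (ball y R).indicator (g y) z) :=
    hg.indicator (measurableSet_lt (measurable_snd.dist measurable_fst) measurable_const)
  have hsymm (y z : X) : (ball y R).indicator (g y) z = (ball z R).indicator (g · z) y := by
    simp only [indicator, mem_ball, dist_comm z y]
  calc ∫⁻ y in ball x r, ∫⁻ z in ball y R, g y z ∂ν ∂μ
      = ∫⁻ y in ball x r, ∫⁻ z, (ball y R).indicator (g y) z ∂ν ∂μ := by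
        simp_rw [lintegral_indicator measurableSet_ball]
    _ = ∫⁻ z, ∫⁻ y in ball x r, (ball y R).indicator (g y) z ∂μ ∂ν :=
        lintegral_lintegral_swap hmeas.aemeasurable
    _ = ∫⁻ z, ∫⁻ y in ball z R ∩ ball x r, g y z ∂μ ∂ν := by
        simp_rw [hsymm, lintegral_indicator measurableSet_ball,
          Measure.restrict_restrict measurableSet_ball]
    _ ≤ ∫⁻ z, (ball x (r + R)).indicator (fun _ => B) z ∂ν := by
        refine lintegral_mono fun z => ?_
        by_cases hz : z ∈ ball x (r + R)
        · simpa [hz] using hB z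
        · have : Disjoint (ball z R) (ball x r) :=
            ball_disjoint_ball (by rw [mem_ball, not_lt] at hz; linarith)
          simp [this.inter_eq]
    _ = B * ν (ball x (r + R)) := by
        rw [lintegral_indicator measurableSet_ball, setLIntegral_const]

end DoubleIntegral

theorem stmt0_general (d : ℕ) (s : ℝ) (hs : 0 < s) (hsd : s < d) :
    ∃ C : ℝ, 0 < C ∧
      ∀ (ν : Measure (EuclideanSpace ℝ (Fin d))) [IsLocallyFiniteMeasure ν]
        (x : EuclideanSpace ℝ (Fin d)) (r R : ℝ), 0 < r → 0 < R →
        ∫⁻ y in ball x r, (∫⁻ z in ball y R, ENNReal.ofReal ((‖z - y‖ ^ s)⁻¹) ∂ν) ∂volume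
          ≤ ENNReal.ofReal (C * min r R ^ ((d : ℝ) - s)) * ν (ball x (r + R)) := by
  have hd : 1 ≤ finrank ℝ (EuclideanSpace ℝ (Fin d)) := by
    rw [finrank_euclideanSpace_fin]
    exact_mod_cast (hs.trans hsd)
  set K := ∫⁻ u in ball (0 : EuclideanSpace ℝ (Fin d)) 1, ENNReal.ofReal ((‖u‖ ^ s)⁻¹)
  have hK : K + volume (ball (0 : EuclideanSpace ℝ (Fin d)) 1) ≠ ⊤ :=
    ENNReal.add_ne_top.2 ⟨(lintegral_unitBall_inv_norm_rpow_lt_top volume hd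
      (by rwa [finrank_euclideanSpace_fin])).ne, measure_ball_lt_top.ne⟩
  have hK₀ : K + volume (ball (0 : EuclideanSpace ℝ (Fin d)) 1) ≠ 0 :=
    ((measure_ball_pos _ _ one_pos).trans_le le_add_self).ne'
  refine ⟨_, ENNReal.toReal_pos hK₀ hK, fun ν _ x r R hr hR => ?_⟩
  rw [ENNReal.ofReal_mul ENNReal.toReal_nonneg, ENNReal.ofReal_toReal hK]
  refine lintegral_ball_lintegral_ball_le (by fun_prop) x fun z => ?_
  obtain ⟨c, hc⟩ : ∃ c, ball z R ∩ ball x r ⊆ ball c (min r R) := by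
    rcases le_total r R with h | h
    · exact ⟨x, by simp [min_eq_left h]⟩
    · exact ⟨z, by simp [min_eq_right h]⟩
  calc _ ≤ _ := lintegral_mono_set hc
    _ ≤ _ := by
      simpa only [finrank_euclideanSpace_fin] using
        setLIntegral_ball_inv_norm_sub_rpow_le volume c z (lt_min hr hR) hs.le

/-- There is a constant `C > 0`, depending only on `d` and `s`, such that for
every locally finite Borel measure `ν` on `ℝ^d`, every `x ∈ ℝ^d`, and all `r, R > 0`,
`∫_{B(x,r)} ∫_{B(y,R)} |z−y|^{−s} dν(z) dm_d(y) ≤ C · min(r,R)^{d−s} · ν(B(x, r+R))`. -/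
theorem stmt0 (d : ℕ) (hd : 2 ≤ d) (s : ℝ) (hs : 0 < s) (hsd : s < d) :
    ∃ C : ℝ, 0 < C ∧
      ∀ (ν : Measure (EuclideanSpace ℝ (Fin d))) [IsLocallyFiniteMeasure ν]
        (x : EuclideanSpace ℝ (Fin d)) (r R : ℝ), 0 < r → 0 < R →
        ∫⁻ y in ball x r, (∫⁻ z in ball y R, ENNReal.ofReal ((‖z - y‖ ^ s)⁻¹) ∂ν) ∂volume
          ≤ ENNReal.ofReal (C * min r R ^ ((d : ℝ) - s)) * ν (ball x (r + R)) :=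
  stmt0_general d s hs hsd
end

section
/- Suppose f : ℝ^d → ℂ satisfies f(0) = 0 and is α-Hölder continuous with Hölder seminorm at most 1, and for some δ > 0 the function g_δ : ℝ^d → ℂ is α-Hölder continuous, supported in the closed ball of radius δ centred at the origin, with α-Hölder seminorm at most A/δ^α for some A > 0. Then the product h_δ = f·g_δ is α-Hölder continuous with α-Hölder seminorm at most 2A. -/
open Metric

/-- If `f(0) = 0`, `f` is `α`-Hölder with seminorm at most `1`, and `g_δ` is
`α`-Hölder with seminorm at most `A/δ^α` and supported in the closed ball of radius `δ`
centred at the origin, then `h_δ = f·g_δ` is `α`-Hölder with seminorm at most `2A`. -/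
theorem stmt2 (d : ℕ) (hd : 2 ≤ d) (α : ℝ) (hα0 : 0 < α) (hα1 : α ≤ 1)
    (f g : EuclideanSpace ℝ (Fin d) → ℂ) (δ A : ℝ) (hδ : 0 < δ) (hA : 0 < A)
    (hf0 : f 0 = 0)
    (hf : ∀ x y, ‖f x - f y‖ ≤ ‖x - y‖ ^ α)
    (hgsupp : ∀ x, x ∉ closedBall (0 : EuclideanSpace ℝ (Fin d)) δ → g x = 0)
    (hg : ∀ x y, ‖g x - g y‖ ≤ (A / δ ^ α) * ‖x - y‖ ^ α) :
    ∀ x y, ‖f x * g x - f y * g y‖ ≤ 2 * A * ‖x - y‖ ^ α := by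
  have hδα : (0:ℝ) < δ ^ α := Real.rpow_pos_of_pos hδ α
  -- bound on f
  have fb : ∀ x : EuclideanSpace ℝ (Fin d), ‖f x‖ ≤ ‖x‖ ^ α := by
    intro x
    have := hf x 0
    simpa [hf0] using this
  -- bound on g at nonzero points
  have gb : ∀ y : EuclideanSpace ℝ (Fin d), y ≠ 0 → ‖g y‖ ≤ A := by
    intro y hy
    by_cases hyδ : ‖y‖ ≤ δ
    · have hny : (0:ℝ) < ‖y‖ := norm_pos_iff.mpr hy
      set z := (1 + δ / ‖y‖) • y with hz
      have hzn : ‖z‖ = ‖y‖ + δ := by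
        rw [hz, norm_smul, Real.norm_eq_abs, abs_of_pos (by positivity)]
        field_simp
      have hgz : g z = 0 := by
        apply hgsupp
        simp only [mem_closedBall_zero_iff, hzn, not_le]
        linarith
      have hyz : y - z = -((δ / ‖y‖) • y) := by
        rw [hz, add_smul, one_smul]; abel
      have hzy : ‖y - z‖ = δ := by
        rw [hyz, norm_neg, norm_smul, Real.norm_eq_abs,
          abs_of_pos (by positivity)]
        field_simp
      calc ‖g y‖ = ‖g y - g z‖ := by rw [hgz, sub_zero]
        _ ≤ (A / δ ^ α) * ‖y - z‖ ^ α := hg y z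
        _ = A := by rw [hzy]; field_simp
    · have : g y = 0 := hgsupp y (by
        simpa [mem_closedBall_zero_iff] using hyδ)
      simp [this, hA.le]
  intro x y
  have hxyα : (0:ℝ) ≤ ‖x - y‖ ^ α := Real.rpow_nonneg (norm_nonneg _) α
  by_cases hx0 : x = 0
  · subst hx0
    by_cases hy0 : y = 0
    · subst hy0
      have h0 : ‖f 0 * g 0 - f 0 * g 0‖ = 0 := by simp
      rw [h0]
      positivity
    · have hgy : ‖g y‖ ≤ A := gb y hy0
      have h1 : ‖f 0 * g 0 - f y * g y‖ = ‖f y‖ * ‖g y‖ := by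
        simp [hf0]
      have h2 : ‖f y‖ ≤ ‖(0:EuclideanSpace ℝ (Fin d)) - y‖ ^ α := by
        have := fb y
        simpa [norm_sub_rev] using this
      calc ‖f 0 * g 0 - f y * g y‖ = ‖f y‖ * ‖g y‖ := h1
        _ ≤ ‖(0:EuclideanSpace ℝ (Fin d)) - y‖ ^ α * A := by
            apply mul_le_mul h2 hgy (norm_nonneg _) (Real.rpow_nonneg (norm_nonneg _) α)
        _ ≤ 2 * A * ‖(0:EuclideanSpace ℝ (Fin d)) - y‖ ^ α := by
            nlinarith [Real.rpow_nonneg (norm_nonneg ((0:EuclideanSpace ℝ (Fin d)) - y)) α]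
  · by_cases hy0 : y = 0
    · subst hy0
      have hgx : ‖g x‖ ≤ A := gb x hx0
      have h1 : ‖f x * g x - f 0 * g 0‖ = ‖f x‖ * ‖g x‖ := by
        simp [hf0]
      have h2 : ‖f x‖ ≤ ‖x - (0:EuclideanSpace ℝ (Fin d))‖ ^ α := by
        simpa using fb x
      calc ‖f x * g x - f 0 * g 0‖ = ‖f x‖ * ‖g x‖ := h1
        _ ≤ ‖x - (0:EuclideanSpace ℝ (Fin d))‖ ^ α * A := by
            apply mul_le_mul h2 hgx (norm_nonneg _) (Real.rpow_nonneg (norm_nonneg _) α)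
        _ ≤ 2 * A * ‖x - (0:EuclideanSpace ℝ (Fin d))‖ ^ α := by
            nlinarith [Real.rpow_nonneg (norm_nonneg (x - (0:EuclideanSpace ℝ (Fin d)))) α]
    · -- generic case: x ≠ 0, y ≠ 0
      by_cases hgx : g x = 0
      · by_cases hgy : g y = 0
        · simp [hgx, hgy, hxyα, mul_nonneg, hA.le]
        · have hyδ : ‖y‖ ≤ δ := by
            by_contra h
            exact hgy (hgsupp y (by simpa [mem_closedBall_zero_iff] using h))
          have h1 : ‖f x * g x - f y * g y‖ = ‖f y‖ * ‖g y - g x‖ := by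
            rw [hgx]
            simp [norm_sub_rev, norm_mul]
          have hfyb : ‖f y‖ ≤ δ ^ α := by
            calc ‖f y‖ ≤ ‖y‖ ^ α := fb y
              _ ≤ δ ^ α := Real.rpow_le_rpow (norm_nonneg _) hyδ hα0.le
          have hgb : ‖g y - g x‖ ≤ (A / δ ^ α) * ‖x - y‖ ^ α := by
            have := hg y x
            simpa [norm_sub_rev] using this
          calc ‖f x * g x - f y * g y‖ = ‖f y‖ * ‖g y - g x‖ := h1
            _ ≤ δ ^ α * ((A / δ ^ α) * ‖x - y‖ ^ α) := by
                apply mul_le_mul hfyb hgb (norm_nonneg _) hδα.le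
            _ = A * ‖x - y‖ ^ α := by field_simp
            _ ≤ 2 * A * ‖x - y‖ ^ α := by nlinarith
      · have hxδ : ‖x‖ ≤ δ := by
          by_contra h
          exact hgx (hgsupp x (by simpa [mem_closedBall_zero_iff] using h))
        have hgy : ‖g y‖ ≤ A := gb y hy0
        have hfxb : ‖f x‖ ≤ δ ^ α := by
          calc ‖f x‖ ≤ ‖x‖ ^ α := fb x
            _ ≤ δ ^ α := Real.rpow_le_rpow (norm_nonneg _) hxδ hα0.le
        have hdecomp : f x * g x - f y * g y
            = f x * (g x - g y) + (f x - f y) * g y := by ring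
        calc ‖f x * g x - f y * g y‖
            = ‖f x * (g x - g y) + (f x - f y) * g y‖ := by rw [hdecomp]
          _ ≤ ‖f x * (g x - g y)‖ + ‖(f x - f y) * g y‖ := norm_add_le _ _
          _ = ‖f x‖ * ‖g x - g y‖ + ‖f x - f y‖ * ‖g y‖ := by rw [norm_mul, norm_mul]
          _ ≤ δ ^ α * ((A / δ ^ α) * ‖x - y‖ ^ α) + ‖x - y‖ ^ α * A := by
              apply add_le_add
              · exact mul_le_mul hfxb (hg x y) (norm_nonneg _) hδα.le
              · exact mul_le_mul (hf x y) hgy (norm_nonneg _) hxyα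
          _ = 2 * A * ‖x - y‖ ^ α := by field_simp; ring
end

section
/- The function g : ℝ^d → ℝ defined by g(x) = min(1, |x|)^{s+α} is α-Hölder continuous on ℝ^d with α-Hölder seminorm at most (s+α)/α. -/
/-!
Put `p = s + α`. For `0 ≤ b ≤ a ≤ 1`, write `a ^ p = (a ^ α) ^ (p / α)`: since `p / α ≥ 1` and
`a ^ α ≤ 1`, the convex map `u ↦ u ^ (p / α)` has slope at most `p / α` on `[0, 1]`, so
`a ^ p - b ^ p ≤ (p / α) (a ^ α - b ^ α)`, and `a ^ α - b ^ α ≤ (a - b) ^ α` by subadditivity of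
`t ↦ t ^ α`. Both `t ↦ min 1 t` and `x ↦ ‖x‖` are `1`-Lipschitz, which transfers the bound to `g`.
-/

namespace Real

lemma rpow_sub_rpow_le_mul_sub {q u v : ℝ} (hq : 1 ≤ q) (hv : 0 ≤ v) (hvu : v ≤ u)
    (hu : u ≤ 1) : u ^ q - v ^ q ≤ q * (u - v) := by
  rcases hvu.eq_or_lt with rfl | hvu
  · simp
  have hslope : slope (· ^ q) v u ≤ q * u ^ (q - 1) :=
    (convexOn_rpow hq).slope_le_of_hasDerivAt hv (hv.trans hvu.le) hvu
      (hasDerivAt_rpow_const (Or.inr hq))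
  have hderiv : q * u ^ (q - 1) ≤ q :=
    mul_le_of_le_one_right (by linarith) (rpow_le_one (hv.trans hvu.le) hu (by linarith))
  rw [slope_def_field, div_le_iff₀ (sub_pos.2 hvu)] at hslope
  exact hslope.trans (mul_le_mul_of_nonneg_right hderiv (sub_pos.2 hvu).le)

lemma rpow_sub_rpow_le_rpow_sub {α a b : ℝ} (hα0 : 0 ≤ α) (hα1 : α ≤ 1) (hb : 0 ≤ b)
    (hba : b ≤ a) : a ^ α - b ^ α ≤ (a - b) ^ α := by
  have := rpow_add_le_add_rpow (sub_nonneg.2 hba) hb hα0 hα1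
  rw [sub_add_cancel] at this
  linarith

lemma rpow_sub_rpow_le_div_mul_rpow_sub {p α a b : ℝ} (hα0 : 0 < α) (hα1 : α ≤ 1) (hαp : α ≤ p)
    (hb : 0 ≤ b) (hba : b ≤ a) (ha : a ≤ 1) : a ^ p - b ^ p ≤ p / α * (a - b) ^ α := by
  have hpow (x : ℝ) (hx : 0 ≤ x) : x ^ p = (x ^ α) ^ (p / α) := by
    rw [← rpow_mul hx, mul_div_cancel₀ _ hα0.ne']
  calc a ^ p - b ^ p = (a ^ α) ^ (p / α) - (b ^ α) ^ (p / α) := by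
        rw [hpow a (hb.trans hba), hpow b hb]
    _ ≤ p / α * (a ^ α - b ^ α) :=
        rpow_sub_rpow_le_mul_sub ((one_le_div hα0).2 hαp) (rpow_nonneg hb α)
          (rpow_le_rpow hb hba hα0.le) (rpow_le_one (hb.trans hba) ha hα0.le)
    _ ≤ p / α * (a - b) ^ α :=
        mul_le_mul_of_nonneg_left (rpow_sub_rpow_le_rpow_sub hα0.le hα1 hb hba)
          (div_nonneg (hα0.le.trans hαp) hα0.le)

lemma abs_rpow_sub_rpow_le_div_mul_abs_sub_rpow {p α a b : ℝ} (hα0 : 0 < α) (hα1 : α ≤ 1)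
    (hαp : α ≤ p) (ha0 : 0 ≤ a) (ha1 : a ≤ 1) (hb0 : 0 ≤ b) (hb1 : b ≤ 1) :
    |a ^ p - b ^ p| ≤ p / α * |a - b| ^ α := by
  wlog hba : b ≤ a generalizing a b
  · rw [abs_sub_comm, abs_sub_comm a]
    exact this hb0 hb1 ha0 ha1 (le_of_not_ge hba)
  rw [abs_of_nonneg (sub_nonneg.2 hba),
    abs_of_nonneg (sub_nonneg.2 (rpow_le_rpow hb0 hba (hα0.le.trans hαp)))]
  exact rpow_sub_rpow_le_div_mul_rpow_sub hα0 hα1 hαp hb0 hba ha1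

end Real

theorem stmt3_general (d : ℕ) (s α : ℝ) (hs : 0 < s) (hα0 : 0 < α) (hα1 : α ≤ 1) :
    ∀ x y : EuclideanSpace ℝ (Fin d),
      |min 1 ‖x‖ ^ (s + α) - min 1 ‖y‖ ^ (s + α)| ≤ ((s + α) / α) * ‖x - y‖ ^ α := by
  intro x y
  have hmin : |min 1 ‖x‖ - min 1 ‖y‖| ≤ ‖x - y‖ :=
    calc |min 1 ‖x‖ - min 1 ‖y‖| ≤ |‖x‖ - ‖y‖| := by
          simpa using abs_min_sub_min_le_max 1 ‖x‖ 1 ‖y‖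
      _ ≤ ‖x - y‖ := abs_norm_sub_norm_le x y
  calc |min 1 ‖x‖ ^ (s + α) - min 1 ‖y‖ ^ (s + α)|
      ≤ (s + α) / α * |min 1 ‖x‖ - min 1 ‖y‖| ^ α :=
        Real.abs_rpow_sub_rpow_le_div_mul_abs_sub_rpow hα0 hα1 (by linarith)
          (le_min zero_le_one (norm_nonneg x)) (min_le_left _ _)
          (le_min zero_le_one (norm_nonneg y)) (min_le_left _ _)
    _ ≤ (s + α) / α * ‖x - y‖ ^ α := by gcongr

/-- The function `g(x) = min(1,|x|)^{s+α}` is `α`-Hölder continuous on `ℝ^d`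
with `α`-Hölder seminorm at most `(s+α)/α`. -/
theorem stmt3 (d : ℕ) (hd : 2 ≤ d) (s α : ℝ) (hs : 0 < s) (hα0 : 0 < α) (hα1 : α ≤ 1) :
    ∀ x y : EuclideanSpace ℝ (Fin d),
      |min 1 ‖x‖ ^ (s + α) - min 1 ‖y‖ ^ (s + α)| ≤ ((s + α) / α) * ‖x - y‖ ^ α :=
  stmt3_general d s α hs hα0 hα1
end

section
/- Let K be an s-dimensional CZ kernel and K_δ its regularization. There is a constant C (depending on s, α, ‖K‖_*) such that for all x, y, y' ∈ ℝ^d, |K_δ(x−y) − K_δ(x−y')| ≤ C · min( δ^{−s}, |y−y'|^α / min(|x−y|, |x−y'|)^{s+α} ). -/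
open Classical
open scoped NNReal ENNReal

/-!
Write `K_δ(w) = G(w) · max(δ, |w|)^(-p)` with `p = s + α` and `G(w) = K(w) |w|^p`, which is
`α`-Hölder with constant `‖K‖_*` and satisfies `|G(w)| ≤ |w|^α`. The latter gives
`|K_δ(w)| ≤ max(δ, |w|)^(-s) ≤ δ^(-s)`. For `|z| ≤ |z'|`, put `A = max(δ, |z|)`,
`B = max(δ, |z'|)` and split
`K_δ(z) - K_δ(z') = A^(-p) (G(z) - G(z')) + (A^(-p) - B^(-p)) G(z')`. The first term is at most
`‖K‖_* |z - z'|^α A^(-p)`; in the second, `|G(z')| ≤ B^α` and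
`B^α (A^(-p) - B^(-p)) ≤ (p + 1) (B - A)^α A^(-p)` with `B - A ≤ |z - z'|`.
-/
lemma one_sub_rpow_le_mul_one_sub {u p : ℝ} (hu0 : 0 < u) (hu1 : u ≤ 1) (hp : 0 ≤ p) :
    1 - u ^ p ≤ (p + 1) * (1 - u) := by
  rcases le_total p 1 with hp1 | hp1
  · have : u ≤ u ^ p := Real.self_le_rpow_of_le_one hu0.le hu1 hp1
    nlinarith
  · have bernoulli := one_add_mul_self_le_rpow_one_add (s := u - 1) (by linarith) hp1
    rw [add_sub_cancel] at bernoulli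
    nlinarith

lemma rpow_mul_div_le_rpow {a b α : ℝ} (ha : 0 ≤ a) (hab : a ≤ b) (hα : α ≤ 1) :
    b ^ α * (a / b) ≤ a ^ α := by
  have hb : 0 ≤ b := ha.trans hab
  rcases hb.eq_or_lt with rfl | hb'
  · simp [Real.rpow_nonneg ha]
  calc b ^ α * (a / b) ≤ b ^ α * (a / b) ^ α :=
        mul_le_mul_of_nonneg_left
          (Real.self_le_rpow_of_le_one (div_nonneg ha hb) (div_le_one_of_le₀ hab hb) hα)
          (Real.rpow_nonneg hb α)
    _ = a ^ α := by
        rw [← Real.mul_rpow hb (div_nonneg ha hb), mul_div_cancel₀ a hb'.ne']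

lemma rpow_mul_rpow_neg_sub_rpow_neg_le {A B p α : ℝ} (hA : 0 < A) (hAB : A ≤ B) (hp : 0 ≤ p)
    (hα : α ≤ 1) :
    B ^ α * (A ^ (-p) - B ^ (-p)) ≤ (p + 1) * (B - A) ^ α * A ^ (-p) := by
  have hB : 0 < B := hA.trans_le hAB
  have hsplit : A ^ (-p) - B ^ (-p) = A ^ (-p) * (1 - (A / B) ^ p) := by
    rw [Real.div_rpow hA.le hB.le, Real.rpow_neg hA.le, Real.rpow_neg hB.le]
    field_simp
  have hbern := one_sub_rpow_le_mul_one_sub (div_pos hA hB) ((div_le_one hB).2 hAB) hp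
  have hone_sub : 1 - A / B = (B - A) / B := by field_simp
  have hweight := rpow_mul_div_le_rpow (sub_nonneg.2 hAB) (sub_le_self B hA.le) hα
  calc B ^ α * (A ^ (-p) - B ^ (-p)) = A ^ (-p) * (B ^ α * (1 - (A / B) ^ p)) := by
        rw [hsplit]; ring
    _ ≤ A ^ (-p) * (B ^ α * ((p + 1) * ((B - A) / B))) := by
        rw [← hone_sub]; gcongr
    _ = A ^ (-p) * ((p + 1) * (B ^ α * ((B - A) / B))) := by ring
    _ ≤ A ^ (-p) * ((p + 1) * (B - A) ^ α) := by gcongr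
    _ = (p + 1) * (B - A) ^ α * A ^ (-p) := by ring

section RegKernel

variable {E F : Type*} [NormedAddCommGroup E] [NormedAddCommGroup F] [NormedSpace ℝ F]

/-- For `G w = K w * ‖w‖ ^ (s + α)`, `regKernel G δ (s + α)` is the regularized kernel `K_δ`. -/
noncomputable def regKernel (G : E → F) (δ p : ℝ) (w : E) : F := max δ ‖w‖ ^ (-p) • G w

lemma norm_regKernel_le {G : E → F} {s α δ : ℝ} (hG : ∀ w, ‖G w‖ ≤ ‖w‖ ^ α) (hs : 0 ≤ s)
    (hα : 0 ≤ α) (hδ : 0 < δ) (w : E) :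
    ‖regKernel G δ (s + α) w‖ ≤ δ ^ (-s) := by
  have hM : 0 < max δ ‖w‖ := lt_max_of_lt_left hδ
  calc ‖regKernel G δ (s + α) w‖ = max δ ‖w‖ ^ (-(s + α)) * ‖G w‖ := by
        rw [regKernel, norm_smul, Real.norm_of_nonneg (Real.rpow_nonneg hM.le _)]
    _ ≤ max δ ‖w‖ ^ (-(s + α)) * max δ ‖w‖ ^ α := by
        gcongr
        exact (hG w).trans (Real.rpow_le_rpow (norm_nonneg w) (le_max_right _ _) hα)
    _ = max δ ‖w‖ ^ (-s) := by rw [← Real.rpow_add hM]; ring_nf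
    _ ≤ δ ^ (-s) := Real.rpow_le_rpow_of_nonpos hδ (le_max_left _ _) (neg_nonpos.2 hs)

lemma norm_regKernel_sub_le_of_norm_le {G : E → F} {p α Kstar δ : ℝ}
    (hG : ∀ w, ‖G w‖ ≤ ‖w‖ ^ α) (hGholder : ∀ z z', ‖G z - G z'‖ ≤ Kstar * ‖z - z'‖ ^ α)
    (hp : 0 ≤ p) (hα0 : 0 ≤ α) (hα1 : α ≤ 1) (hδ : 0 < δ) {z z' : E} (hzz' : ‖z‖ ≤ ‖z'‖) :
    ‖regKernel G δ p z - regKernel G δ p z'‖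
      ≤ (Kstar + p + 1) * ‖z - z'‖ ^ α * max δ ‖z‖ ^ (-p) := by
  set A := max δ ‖z‖
  set B := max δ ‖z'‖
  have hA : 0 < A := lt_max_of_lt_left hδ
  have hAB : A ≤ B := max_le_max le_rfl hzz'
  have hBA : B - A ≤ ‖z - z'‖ := by
    calc B - A ≤ max (δ - δ) (‖z'‖ - ‖z‖) := max_sub_max_le_max _ _ _ _
      _ = ‖z'‖ - ‖z‖ := by rw [sub_self, max_eq_right (sub_nonneg.2 hzz')]
      _ ≤ ‖z - z'‖ := by rw [norm_sub_rev]; exact norm_sub_norm_le z' z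
  have hdecomp : regKernel G δ p z - regKernel G δ p z'
      = A ^ (-p) • (G z - G z') + (A ^ (-p) - B ^ (-p)) • G z' := by
    simp only [regKernel, smul_sub, sub_smul]; abel
  have hAp : 0 ≤ A ^ (-p) := Real.rpow_nonneg hA.le _
  have hincr : 0 ≤ A ^ (-p) - B ^ (-p) :=
    sub_nonneg.2 (Real.rpow_le_rpow_of_nonpos hA hAB (neg_nonpos.2 hp))
  have hGz' : ‖G z'‖ ≤ B ^ α :=
    (hG z').trans (Real.rpow_le_rpow (norm_nonneg z') (le_max_right _ _) hα0)
  calc ‖regKernel G δ p z - regKernel G δ p z'‖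
      ≤ A ^ (-p) * ‖G z - G z'‖ + (A ^ (-p) - B ^ (-p)) * ‖G z'‖ := by
        rw [hdecomp]
        refine (norm_add_le _ _).trans_eq ?_
        rw [norm_smul, norm_smul, Real.norm_of_nonneg hAp, Real.norm_of_nonneg hincr]
    _ ≤ A ^ (-p) * (Kstar * ‖z - z'‖ ^ α) + B ^ α * (A ^ (-p) - B ^ (-p)) := by
        gcongr ?_ + ?_
        · gcongr; exact hGholder z z'
        · rw [mul_comm]; gcongr
    _ ≤ A ^ (-p) * (Kstar * ‖z - z'‖ ^ α) + (p + 1) * (B - A) ^ α * A ^ (-p) := by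
        grw [rpow_mul_rpow_neg_sub_rpow_neg_le hA hAB hp hα1]
    _ ≤ A ^ (-p) * (Kstar * ‖z - z'‖ ^ α) + (p + 1) * ‖z - z'‖ ^ α * A ^ (-p) := by
        gcongr
    _ = (Kstar + p + 1) * ‖z - z'‖ ^ α * A ^ (-p) := by ring

lemma norm_regKernel_sub_le {G : E → F} {p α Kstar δ : ℝ}
    (hG : ∀ w, ‖G w‖ ≤ ‖w‖ ^ α) (hGholder : ∀ z z', ‖G z - G z'‖ ≤ Kstar * ‖z - z'‖ ^ α)
    (hp : 0 ≤ p) (hα0 : 0 ≤ α) (hα1 : α ≤ 1) (hδ : 0 < δ) (z z' : E) :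
    ‖regKernel G δ p z - regKernel G δ p z'‖
      ≤ (Kstar + p + 1) * ‖z - z'‖ ^ α * max δ (min ‖z‖ ‖z'‖) ^ (-p) := by
  rcases le_total ‖z‖ ‖z'‖ with h | h
  · rw [min_eq_left h]
    exact norm_regKernel_sub_le_of_norm_le hG hGholder hp hα0 hα1 hδ h
  · rw [min_eq_right h, norm_sub_rev, norm_sub_rev z]
    exact norm_regKernel_sub_le_of_norm_le hG hGholder hp hα0 hα1 hδ h

end RegKernel

lemma truncation_eq_regKernel {E : Type*} [NormedAddCommGroup E] [DecidableEq E] (K : E → ℂ)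
    {δ : ℝ} (hδ : 0 < δ) (p : ℝ) (w : E) :
    (if w = 0 then 0 else K w * (((‖w‖ / max δ ‖w‖) ^ p : ℝ) : ℂ))
      = regKernel (fun w ↦ if w = 0 then 0 else K w * ((‖w‖ ^ p : ℝ) : ℂ)) δ p w := by
  by_cases hw : w = 0
  · simp [regKernel, hw]
  · have hM : 0 < max δ ‖w‖ := lt_max_of_lt_left hδ
    rw [regKernel, if_neg hw, if_neg hw, Complex.real_smul,
      Real.div_rpow (norm_nonneg w) hM.le, Real.rpow_neg hM.le]
    push_cast
    ring

lemma norm_ite_mul_norm_rpow_le {E : Type*} [NormedAddCommGroup E] [DecidableEq E] {K : E → ℂ}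
    {s : ℝ} (hK : ∀ x, x ≠ 0 → ‖K x‖ ≤ (‖x‖ ^ s)⁻¹) (α : ℝ) (w : E) :
    ‖if w = 0 then 0 else K w * ((‖w‖ ^ (s + α) : ℝ) : ℂ)‖ ≤ ‖w‖ ^ α := by
  by_cases hw : w = 0
  · simp only [hw, if_pos, norm_zero]; exact Real.rpow_nonneg le_rfl α
  · have hpos : 0 < ‖w‖ := norm_pos_iff.2 hw
    rw [if_neg hw, norm_mul, Complex.norm_real, Real.norm_of_nonneg (Real.rpow_nonneg hpos.le _)]
    calc ‖K w‖ * ‖w‖ ^ (s + α) ≤ (‖w‖ ^ s)⁻¹ * ‖w‖ ^ (s + α) := by gcongr; exact hK w hw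
      _ = ‖w‖ ^ α := by
          rw [Real.rpow_add hpos, inv_mul_cancel_left₀ (Real.rpow_pos_of_pos hpos s).ne']

lemma ENNReal.ofReal_mul_rpow_neg_le_div {a m A p : ℝ} (ha : 0 ≤ a) (hm : 0 ≤ m) (hmA : m ≤ A)
    (hp : 0 < p) :
    ENNReal.ofReal (a * A ^ (-p)) ≤ ENNReal.ofReal a / ENNReal.ofReal (m ^ p) := by
  rcases hm.eq_or_lt with rfl | hm
  · rcases ha.eq_or_lt with rfl | ha
    · simp
    · rw [Real.zero_rpow hp.ne', ENNReal.ofReal_zero, ENNReal.div_zero (by positivity)]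
      exact le_top
  · rw [← ENNReal.ofReal_div_of_pos (Real.rpow_pos_of_pos hm p)]
    refine ENNReal.ofReal_le_ofReal ?_
    rw [div_eq_mul_inv, ← Real.rpow_neg hm.le]
    exact mul_le_mul_of_nonneg_left (Real.rpow_le_rpow_of_nonpos hm hmA (neg_nonpos.2 hp.le)) ha

theorem stmt6_general (d : ℕ) (s α Kstar : ℝ) (hs : 0 < s)
    (hα0 : 0 < α) (hα1 : α ≤ 1) (hKstar : 0 < Kstar) :
    ∃ C : ℝ≥0, 0 < C ∧
      ∀ K : EuclideanSpace ℝ (Fin d) → ℂ,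
        (∀ x, x ≠ 0 → ‖K x‖ ≤ (‖x‖ ^ s)⁻¹) →
        (∀ x, K (-x) = -K x) →
        (∀ x y, ‖(if x = 0 then 0 else K x * ((‖x‖ ^ (s + α) : ℝ) : ℂ))
            - (if y = 0 then 0 else K y * ((‖y‖ ^ (s + α) : ℝ) : ℂ))‖ ≤ Kstar * ‖x - y‖ ^ α) →
        ∀ δ : ℝ, 0 < δ → ∀ x y y' : EuclideanSpace ℝ (Fin d),
          (‖(if x - y = 0 then 0 else
                K (x - y) * (((‖x - y‖ / max δ ‖x - y‖) ^ (s + α) : ℝ) : ℂ))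
              - (if x - y' = 0 then 0 else
                K (x - y') * (((‖x - y'‖ / max δ ‖x - y'‖) ^ (s + α) : ℝ) : ℂ))‖₊ : ℝ≥0∞)
            ≤ (C : ℝ≥0∞) *
              min (ENNReal.ofReal (δ ^ (-s)))
                (ENNReal.ofReal (‖y - y'‖ ^ α)
                  / ENNReal.ofReal (min ‖x - y‖ ‖x - y'‖ ^ (s + α))) := by
  have hp : 0 < s + α := by positivity
  set C : ℝ := Kstar + (s + α) + 2
  have hC : 0 < C := by positivity
  refine ⟨C.toNNReal, Real.toNNReal_pos.2 hC, fun K hK _ hH δ hδ x y y' ↦ ?_⟩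
  rw [truncation_eq_regKernel K hδ, truncation_eq_regKernel K hδ, ← enorm_eq_nnnorm,
    ← ofReal_norm, ENNReal.coe_nnreal_eq, Real.coe_toNNReal _ hC.le, ← min_mul_mul_left]
  set G := fun w : EuclideanSpace ℝ (Fin d) ↦
    if w = 0 then 0 else K w * ((‖w‖ ^ (s + α) : ℝ) : ℂ)
  have hG : ∀ w, ‖G w‖ ≤ ‖w‖ ^ α := norm_ite_mul_norm_rpow_le hK α
  set D := regKernel G δ (s + α) (x - y) - regKernel G δ (s + α) (x - y')
  refine le_min ?_ ?_
  · have hsize : ‖D‖ ≤ C * δ ^ (-s) := by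
      have hδs : 0 ≤ δ ^ (-s) := Real.rpow_nonneg hδ.le _
      calc ‖D‖ ≤ δ ^ (-s) + δ ^ (-s) := (norm_sub_le _ _).trans (add_le_add
              (norm_regKernel_le hG hs.le hα0.le hδ _) (norm_regKernel_le hG hs.le hα0.le hδ _))
        _ ≤ C * δ ^ (-s) := by nlinarith
    rw [← ENNReal.ofReal_mul hC.le]
    exact ENNReal.ofReal_le_ofReal hsize
  · have hholder := norm_regKernel_sub_le hG hH hp.le hα0.le hα1 hδ (x - y) (x - y')
    rw [sub_sub_sub_cancel_left, norm_sub_rev y', mul_assoc] at hholder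
    calc ENNReal.ofReal ‖D‖ ≤ ENNReal.ofReal C *
          ENNReal.ofReal (‖y - y'‖ ^ α * max δ (min ‖x - y‖ ‖x - y'‖) ^ (-(s + α))) := by
          rw [← ENNReal.ofReal_mul hC.le]
          exact ENNReal.ofReal_le_ofReal (hholder.trans (by gcongr; linarith))
      _ ≤ _ := by
          gcongr
          exact ENNReal.ofReal_mul_rpow_neg_le_div (by positivity) (by positivity)
            (le_max_right _ _) hp

/-- For the regularized kernel `K_δ` of an `s`-dimensional CZ kernel there is
`C = C(s,α,‖K‖_*)` such that for all `x, y, y'`,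
`|K_δ(x−y) − K_δ(x−y')| ≤ C · min(δ^{−s}, |y−y'|^α / min(|x−y|,|x−y'|)^{s+α})`
(with the convention that the second quantity is `+∞` when `x = y` or `x = y'`). -/
theorem stmt6 (d : ℕ) (hd : 2 ≤ d) (s α Kstar : ℝ) (hs : 0 < s) (hsd : s < d)
    (hα0 : 0 < α) (hα1 : α ≤ 1) (hKstar : 0 < Kstar) :
    ∃ C : ℝ≥0, 0 < C ∧
      ∀ K : EuclideanSpace ℝ (Fin d) → ℂ,
        (∀ x, x ≠ 0 → ‖K x‖ ≤ (‖x‖ ^ s)⁻¹) →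
        (∀ x, K (-x) = -K x) →
        (∀ x y, ‖(if x = 0 then 0 else K x * ((‖x‖ ^ (s + α) : ℝ) : ℂ))
            - (if y = 0 then 0 else K y * ((‖y‖ ^ (s + α) : ℝ) : ℂ))‖ ≤ Kstar * ‖x - y‖ ^ α) →
        ∀ δ : ℝ, 0 < δ → ∀ x y y' : EuclideanSpace ℝ (Fin d),
          (‖(if x - y = 0 then 0 else
                K (x - y) * (((‖x - y‖ / max δ ‖x - y‖) ^ (s + α) : ℝ) : ℂ))
              - (if x - y' = 0 then 0 else
                K (x - y') * (((‖x - y'‖ / max δ ‖x - y'‖) ^ (s + α) : ℝ) : ℂ))‖₊ : ℝ≥0∞)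
            ≤ (C : ℝ≥0∞) *
              min (ENNReal.ofReal (δ ^ (-s)))
                (ENNReal.ofReal (‖y - y'‖ ^ α)
                  / ENNReal.ofReal (min ‖x - y‖ ‖x - y'‖ ^ (s + α))) :=
  stmt6_general d s α Kstar hs hα0 hα1 hKstar
end

section
/- Let μ be a Λ-nice measure and K an s-dimensional CZ kernel; let K^δ = K − K_δ denote the localized kernel (supported in the closed ball of radius δ). Let f be a compactly supported Lipschitz function and φ a bounded Lipschitz function on ℝ^d, with supports E = supp(f) and F = supp(φ). Then |∬ K^δ(x−y) H_{f,φ}(x,y) dμ(x) dμ(y)| ≤ C_2 δ (‖f‖_{Lip}‖φ‖_∞ + ‖f‖_∞‖φ‖_{Lip}) · μ(E ∩ F_δ), where H_{f,φ}(x,y) = (1/2)[f(y)φ(x) − f(x)φ(y)], F_δ is the closed δ-neighbourhood of F, and C_2 depends only on d, s, Λ. -/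
open Classical MeasureTheory Metric

/-!
The cut-off factor of `K^δ` lies in `[0, 1]` and vanishes beyond `δ`, so `|K^δ(z)| ≤ |z|^(-s)` with
support in `|z| ≤ δ`, while `|H_{f,φ}(x, y)| ≤ ½ (‖f‖_Lip ‖φ‖_∞ + ‖f‖_∞ ‖φ‖_Lip) |x - y|`, and
`K^δ(x - y) H_{f,φ}(x, y) ≠ 0` forces `x` or `y` into `E ∩ F_δ`. The integrand is therefore at most
a constant times `k(x, y) (1_{E ∩ F_δ}(x) + 1_{E ∩ F_δ}(y))`, where
`k(x, y) = |x - y|^(1 - s) 1_{|x - y| ≤ δ}`, and by Tonelli it suffices that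
`∫ k(x, y) dμ(y) ≤ 2·4^s Λ δ`. On the dyadic annulus `δ 2^(-j-1) < |x - y| ≤ δ 2^(-j)` the growth
bound `μ(B(x, r)) ≤ Λ r^s` bounds this integral by `2·4^s Λ δ 2^(-j-1)`; sum the geometric series.
-/

open scoped ENNReal

/-- `t ↦ t ^ (1 - s)` cut off beyond `δ`, written `t / t ^ s` so that it vanishes at `t = 0`. -/
noncomputable def cutoffWeight (s δ t : ℝ) : ℝ := if t ≤ δ then t / t ^ s else 0

/-- `H_{f,φ}`. -/
noncomputable def skewProduct {X : Type*} (f φ : X → ℝ) (x y : X) : ℝ :=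
  1 / 2 * (f y * φ x - f x * φ y)

/-- `K^δ = K - K_δ`. -/
noncomputable def localizedKernel {E : Type*} [Norm E] [Zero E] [DecidableEq E] (K : E → ℂ)
    (s α δ : ℝ) (z : E) : ℂ :=
  if z = 0 then 0 else K z * ((1 - (‖z‖ / max δ ‖z‖) ^ (s + α) : ℝ) : ℂ)

theorem measurable_cutoffWeight (s δ : ℝ) : Measurable (cutoffWeight s δ) :=
  Measurable.ite measurableSet_Iic (measurable_id.div (measurable_id.pow_const s)) measurable_const

theorem cutoffWeight_le {s δ r R t : ℝ} (hs : 0 ≤ s) (hr : 0 < r) (hrt : r ≤ t) (htR : t ≤ R) :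
    cutoffWeight s δ t ≤ R / r ^ s := by
  have ht : 0 < t := hr.trans_le hrt
  unfold cutoffWeight
  split_ifs
  · exact div_le_div₀ (ht.le.trans htR) htR (by positivity) (Real.rpow_le_rpow hr.le hrt hs)
  · exact div_nonneg (ht.le.trans htR) (by positivity)

theorem ne_zero_and_le_of_cutoffWeight_pos {s δ t : ℝ} (h : 0 < cutoffWeight s δ t) :
    t ≠ 0 ∧ t ≤ δ := by
  unfold cutoffWeight at h
  split_ifs at h with htδ
  · refine ⟨fun ht => ?_, htδ⟩
    simp [ht] at h
  · exact (lt_irrefl 0 h).elim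

section NiceMeasure

variable {X : Type*} [PseudoMetricSpace X] [MeasurableSpace X]
  {μ : Measure X} {s Λ : ℝ}

theorem isLocallyFiniteMeasure_of_measure_ball_le
    (hμ : ∀ (x : X) (r : ℝ), 0 < r → μ (ball x r) ≤ ENNReal.ofReal (Λ * r ^ s)) :
    IsLocallyFiniteMeasure μ :=
  ⟨fun x => ⟨ball x 1, ball_mem_nhds x one_pos, (hμ x 1 one_pos).trans_lt ENNReal.ofReal_lt_top⟩⟩

theorem setLIntegral_cutoffWeight_annulus_le (hs : 0 ≤ s)
    (hμ : ∀ (x : X) (r : ℝ), 0 < r → μ (ball x r) ≤ ENNReal.ofReal (Λ * r ^ s))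
    (x : X) (δ : ℝ) {r : ℝ} (hr : 0 < r) :
    ∫⁻ y in {y | r < dist x y ∧ dist x y ≤ 2 * r}, ENNReal.ofReal (cutoffWeight s δ (dist x y)) ∂μ
      ≤ ENNReal.ofReal (2 * 4 ^ s * Λ * r) := by
  set A := {y | r < dist x y ∧ dist x y ≤ 2 * r}
  have hA : A ⊆ ball x (4 * r) := fun y hy => by rw [mem_ball']; linarith [hy.2]
  calc ∫⁻ y in A, ENNReal.ofReal (cutoffWeight s δ (dist x y)) ∂μ
      ≤ ∫⁻ _ in A, ENNReal.ofReal (2 * r / r ^ s) ∂μ :=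
        setLIntegral_mono measurable_const fun y hy =>
          ENNReal.ofReal_le_ofReal (cutoffWeight_le hs hr hy.1.le hy.2)
    _ ≤ ENNReal.ofReal (2 * r / r ^ s) * ENNReal.ofReal (Λ * (4 * r) ^ s) := by
        rw [setLIntegral_const]
        gcongr
        exact (measure_mono hA).trans (hμ x _ (by positivity))
    _ = ENNReal.ofReal (2 * 4 ^ s * Λ * r) := by
        rw [← ENNReal.ofReal_mul (by positivity), Real.mul_rpow (by norm_num) hr.le]
        congr 1
        field_simp

theorem lintegral_cutoffWeight_dist_le (hs : 0 ≤ s) (hΛ : 0 ≤ Λ)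
    (hμ : ∀ (x : X) (r : ℝ), 0 < r → μ (ball x r) ≤ ENNReal.ofReal (Λ * r ^ s))
    (x : X) {δ : ℝ} (hδ : 0 < δ) :
    ∫⁻ y, ENNReal.ofReal (cutoffWeight s δ (dist x y)) ∂μ ≤ ENNReal.ofReal (2 * 4 ^ s * Λ * δ) := by
  set r : ℕ → ℝ := fun k => δ * 2⁻¹ ^ (k + 1)
  have hsupp : Function.support (fun y => ENNReal.ofReal (cutoffWeight s δ (dist x y)))
      ⊆ ⋃ k, {y | r k < dist x y ∧ dist x y ≤ 2 * r k} := by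
    intro y hy
    obtain ⟨hy0, hyδ⟩ :=
      ne_zero_and_le_of_cutoffWeight_pos (ENNReal.ofReal_pos.mp (pos_iff_ne_zero.mpr hy))
    obtain ⟨k, hk1, hk2⟩ := exists_nat_pow_near_of_lt_one
      (div_pos (dist_nonneg.lt_of_ne' hy0) hδ) ((div_le_one hδ).mpr hyδ)
      (by norm_num : (0 : ℝ) < 2⁻¹) (by norm_num)
    refine Set.mem_iUnion.mpr ⟨k, ?_, ?_⟩
    · show δ * 2⁻¹ ^ (k + 1) < dist x y
      linarith [(lt_div_iff₀ hδ).mp hk1]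
    · have hr : 2 * r k = 2⁻¹ ^ k * δ := by simp only [r, pow_succ]; ring
      linarith [(div_le_iff₀ hδ).mp hk2]
  calc ∫⁻ y, ENNReal.ofReal (cutoffWeight s δ (dist x y)) ∂μ
      = ∫⁻ y in ⋃ k, {y | r k < dist x y ∧ dist x y ≤ 2 * r k},
          ENNReal.ofReal (cutoffWeight s δ (dist x y)) ∂μ :=
        (setLIntegral_eq_of_support_subset hsupp).symm
    _ ≤ ∑' k, ENNReal.ofReal (2 * 4 ^ s * Λ * r k) :=
        (lintegral_iUnion_le _ _).trans <| ENNReal.tsum_le_tsum fun k =>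
          setLIntegral_cutoffWeight_annulus_le hs hμ x δ (by positivity)
    _ = ENNReal.ofReal (2 * 4 ^ s * Λ * δ) := by
        have hr : ∀ k, 2 * 4 ^ s * Λ * r k = 4 ^ s * Λ * δ * 2⁻¹ ^ k := fun k => by
          simp only [r, pow_succ]; ring
        simp_rw [hr]
        rw [← ENNReal.ofReal_tsum_of_nonneg (fun k => by positivity)
          ((summable_geometric_of_lt_one (by norm_num) (by norm_num : (2 : ℝ)⁻¹ < 1)).mul_left _),
          tsum_mul_left, tsum_geometric_inv_two]
        ring_nf

end NiceMeasure

theorem enorm_integral_integral_le_of_kernel_bound {X E : Type*} [MeasurableSpace X]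
    [NormedAddCommGroup E] [NormedSpace ℝ E] {μ : Measure X} [SFinite μ] {k : X → X → ℝ≥0∞}
    (hk : Measurable (Function.uncurry k)) {B : ℝ≥0∞} (hkx : ∀ x, ∫⁻ y, k x y ∂μ ≤ B)
    (hky : ∀ y, ∫⁻ x, k x y ∂μ ≤ B) {S : Set X} (hS : MeasurableSet S) {g : X → X → E}
    (hgk : ∀ x y, ‖g x y‖ₑ ≤ k x y) (hgS : ∀ x y, g x y ≠ 0 → x ∈ S ∨ y ∈ S) :
    ‖∫ x, ∫ y, g x y ∂μ ∂μ‖ₑ ≤ 2 * B * μ S := by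
  have hpt : ∀ x y, ‖g x y‖ₑ ≤ S.indicator 1 x * k x y + S.indicator 1 y * k x y := by
    intro x y
    by_cases hg : g x y = 0
    · simp [hg]
    rcases hgS x y hg with hx | hy
    · exact (hgk x y).trans (by simp [hx])
    · exact (hgk x y).trans (by simp [hy])
  have hkS₁ : Measurable (Function.uncurry fun x y => S.indicator 1 x * k x y) :=
    ((measurable_one.indicator hS).comp measurable_fst).mul hk
  have hkS₂ : Measurable (Function.uncurry fun x y => S.indicator 1 y * k x y) :=
    ((measurable_one.indicator hS).comp measurable_snd).mul hk
  calc ‖∫ x, ∫ y, g x y ∂μ ∂μ‖ₑ ≤ ∫⁻ x, ∫⁻ y, ‖g x y‖ₑ ∂μ ∂μ :=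
        (enorm_integral_le_lintegral_enorm _).trans
          (lintegral_mono fun x => enorm_integral_le_lintegral_enorm _)
    _ ≤ ∫⁻ x, ∫⁻ y, (S.indicator 1 x * k x y + S.indicator 1 y * k x y) ∂μ ∂μ := by
        gcongr with x y
        exact hpt x y
    _ = ∫⁻ x, ∫⁻ y, S.indicator 1 x * k x y ∂μ ∂μ + ∫⁻ x, ∫⁻ y, S.indicator 1 y * k x y ∂μ ∂μ := by
        rw [← lintegral_add_left hkS₁.lintegral_prod_right]
        exact lintegral_congr fun x => lintegral_add_left (hkS₁.comp measurable_prodMk_left) _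
    _ = ∫⁻ x, S.indicator 1 x * ∫⁻ y, k x y ∂μ ∂μ + ∫⁻ y, S.indicator 1 y * ∫⁻ x, k x y ∂μ ∂μ := by
        rw [lintegral_lintegral_swap hkS₂.aemeasurable]
        congr 1
        · exact lintegral_congr fun _ => lintegral_const_mul _ (hk.comp measurable_prodMk_left)
        · exact lintegral_congr fun _ => lintegral_const_mul _ (hk.comp measurable_prodMk_right)
    _ ≤ ∫⁻ x, S.indicator 1 x * B ∂μ + ∫⁻ y, S.indicator 1 y * B ∂μ := by
        gcongr with x y
        exacts [hkx x, hky y]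
    _ = 2 * B * μ S := by
        rw [lintegral_mul_const _ (measurable_one.indicator hS), lintegral_indicator_one hS]
        ring

theorem norm_integral_integral_le_of_kernel_bound {X E : Type*} [MeasurableSpace X]
    [NormedAddCommGroup E] [NormedSpace ℝ E] {μ : Measure X} [SFinite μ] {w : X → X → ℝ}
    (hw : Measurable (Function.uncurry w)) {B : ℝ} (hB : 0 ≤ B)
    (hwx : ∀ x, ∫⁻ y, ENNReal.ofReal (w x y) ∂μ ≤ ENNReal.ofReal B)
    (hwy : ∀ y, ∫⁻ x, ENNReal.ofReal (w x y) ∂μ ≤ ENNReal.ofReal B) {S : Set X}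
    (hS : MeasurableSet S) (hμS : μ S ≠ ∞) {c : ℝ} (hc : 0 ≤ c) {g : X → X → E}
    (hgw : ∀ x y, ‖g x y‖ ≤ c * w x y) (hgS : ∀ x y, g x y ≠ 0 → x ∈ S ∨ y ∈ S) :
    ‖∫ x, ∫ y, g x y ∂μ ∂μ‖ ≤ 2 * c * B * (μ S).toReal := by
  have hbound := enorm_integral_integral_le_of_kernel_bound
    (k := fun x y => ENNReal.ofReal c * ENNReal.ofReal (w x y))
    (B := ENNReal.ofReal c * ENNReal.ofReal B)
    (measurable_const.mul hw.ennreal_ofReal)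
    (fun x => by rw [lintegral_const_mul' _ _ ENNReal.ofReal_ne_top]; gcongr; exact hwx x)
    (fun y => by rw [lintegral_const_mul' _ _ ENNReal.ofReal_ne_top]; gcongr; exact hwy y)
    hS (fun x y => by
      rw [← ofReal_norm, ← ENNReal.ofReal_mul hc]
      exact ENNReal.ofReal_le_ofReal (hgw x y)) hgS
  rw [← toReal_enorm]
  refine (ENNReal.toReal_mono (by finiteness) hbound).trans_eq ?_
  simp only [ENNReal.toReal_mul, ENNReal.toReal_ofNat, ENNReal.toReal_ofReal hc,
    ENNReal.toReal_ofReal hB]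
  ring

theorem abs_mul_sub_mul_le {E : Type*} [SeminormedAddCommGroup E] {f φ : E → ℝ}
    {Lf Lφ Mf Mφ : ℝ} (hLf : ∀ x y, |f x - f y| ≤ Lf * ‖x - y‖) (hMf : ∀ x, |f x| ≤ Mf)
    (hLφ : ∀ x y, |φ x - φ y| ≤ Lφ * ‖x - y‖) (hMφ : ∀ x, |φ x| ≤ Mφ) (x y : E) :
    |f y * φ x - f x * φ y| ≤ (Lf * Mφ + Mf * Lφ) * ‖x - y‖ :=
  calc |f y * φ x - f x * φ y| = |(f y - f x) * φ x + f x * (φ x - φ y)| := by ring_nf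
    _ ≤ |f y - f x| * |φ x| + |f x| * |φ x - φ y| := by
        rw [← abs_mul, ← abs_mul]; exact abs_add_le _ _
    _ ≤ Lf * ‖y - x‖ * Mφ + Mf * (Lφ * ‖x - y‖) := by
        gcongr
        exacts [(abs_nonneg _).trans (hLf y x), hLf y x, hMφ x, (abs_nonneg _).trans (hMf x),
          hMf x, hLφ x y]
    _ = (Lf * Mφ + Mf * Lφ) * ‖x - y‖ := by rw [norm_sub_rev]; ring

theorem nonneg_of_abs_sub_le_mul_norm {E : Type*} [NormedAddCommGroup E] [Nontrivial E]
    {f : E → ℝ} {L : ℝ} (hL : ∀ x y, |f x - f y| ≤ L * ‖x - y‖) : 0 ≤ L := by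
  obtain ⟨x, hx⟩ := exists_ne (0 : E)
  have := (abs_nonneg _).trans (hL x 0)
  exact nonneg_of_mul_nonneg_left this (by simpa using hx)

theorem abs_one_sub_rpow_le_one {t p : ℝ} (ht₀ : 0 ≤ t) (ht₁ : t ≤ 1) (hp : 0 ≤ p) :
    |1 - t ^ p| ≤ 1 := by
  have := Real.rpow_le_one ht₀ ht₁ hp
  have := Real.rpow_nonneg ht₀ p
  rw [abs_le]; constructor <;> linarith

section LocalizedKernel

variable {E : Type*} [NormedAddCommGroup E] [DecidableEq E] {K : E → ℂ} {s α δ : ℝ}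

theorem localizedKernel_eq_zero_of_lt {z : E} (hz : δ < ‖z‖) : localizedKernel K s α δ z = 0 := by
  unfold localizedKernel
  split_ifs with hz0
  · rfl
  · simp [max_eq_right hz.le, div_self (norm_ne_zero_iff.mpr hz0)]

theorem norm_localizedKernel_le (hK : ∀ z, z ≠ 0 → ‖K z‖ ≤ (‖z‖ ^ s)⁻¹) (hsα : 0 ≤ s + α)
    (z : E) : ‖localizedKernel K s α δ z‖ ≤ (‖z‖ ^ s)⁻¹ := by
  by_cases hz : z = 0
  · simp [localizedKernel, hz]; positivity
  rw [localizedKernel, if_neg hz, norm_mul, Complex.norm_real, Real.norm_eq_abs]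
  calc ‖K z‖ * |1 - (‖z‖ / max δ ‖z‖) ^ (s + α)| ≤ (‖z‖ ^ s)⁻¹ * 1 := by
        gcongr
        · exact hK z hz
        · exact abs_one_sub_rpow_le_one (by positivity)
            (div_le_one_of_le₀ (le_max_right _ _) (by positivity)) hsα
    _ = (‖z‖ ^ s)⁻¹ := mul_one _

theorem norm_localizedKernel_mul_le (hK : ∀ z, z ≠ 0 → ‖K z‖ ≤ (‖z‖ ^ s)⁻¹) (hsα : 0 ≤ s + α)
    {z : E} {c A : ℝ} (hc : |c| ≤ A * ‖z‖) :
    ‖localizedKernel K s α δ z * (c : ℂ)‖ ≤ A * cutoffWeight s δ ‖z‖ := by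
  rcases le_or_gt ‖z‖ δ with hzδ | hzδ
  · rw [cutoffWeight, if_pos hzδ, norm_mul, Complex.norm_real, Real.norm_eq_abs]
    calc ‖localizedKernel K s α δ z‖ * |c| ≤ (‖z‖ ^ s)⁻¹ * (A * ‖z‖) :=
          mul_le_mul (norm_localizedKernel_le hK hsα z) hc (abs_nonneg _) (by positivity)
      _ = A * (‖z‖ / ‖z‖ ^ s) := by ring
  · simp [localizedKernel_eq_zero_of_lt hzδ, cutoffWeight, not_le.mpr hzδ]

end LocalizedKernel

theorem abs_skewProduct_le {E : Type*} [SeminormedAddCommGroup E] {f φ : E → ℝ}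
    {Lf Lφ Mf Mφ : ℝ} (hLf : ∀ x y, |f x - f y| ≤ Lf * ‖x - y‖) (hMf : ∀ x, |f x| ≤ Mf)
    (hLφ : ∀ x y, |φ x - φ y| ≤ Lφ * ‖x - y‖) (hMφ : ∀ x, |φ x| ≤ Mφ) (x y : E) :
    |skewProduct f φ x y| ≤ (Lf * Mφ + Mf * Lφ) / 2 * ‖x - y‖ := by
  rw [skewProduct, abs_mul, abs_of_pos one_half_pos]
  linarith [abs_mul_sub_mul_le hLf hMf hLφ hMφ x y]

theorem mem_or_mem_of_skewProduct_ne_zero {X : Type*} [PseudoMetricSpace X] {f φ : X → ℝ}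
    {x y : X} {δ : ℝ} (hxy : dist x y ≤ δ) (h : skewProduct f φ x y ≠ 0) :
    x ∈ tsupport f ∩ cthickening δ (tsupport φ) ∨ y ∈ tsupport f ∩ cthickening δ (tsupport φ) := by
  have h' : f y * φ x - f x * φ y ≠ 0 := right_ne_zero_of_mul h
  by_cases hyx : f y * φ x = 0
  · obtain ⟨hfx, hφy⟩ := mul_ne_zero_iff.mp (by simpa [hyx] using h' : f x * φ y ≠ 0)
    exact .inl ⟨subset_tsupport f hfx,
      mem_cthickening_of_dist_le x y δ _ (subset_tsupport φ hφy) hxy⟩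
  · obtain ⟨hfy, hφx⟩ := mul_ne_zero_iff.mp hyx
    exact .inr ⟨subset_tsupport f hfy,
      mem_cthickening_of_dist_le y x δ _ (subset_tsupport φ hφx) (dist_comm x y ▸ hxy)⟩

theorem stmt9_general (d : ℕ) (hd : 2 ≤ d) (s α Λ : ℝ) (hs : 0 < s)
    (hα0 : 0 < α) (hΛ : 0 < Λ) :
    ∃ C₂ : ℝ, 0 < C₂ ∧
      ∀ (μ : Measure (EuclideanSpace ℝ (Fin d))),
        (∀ (x : EuclideanSpace ℝ (Fin d)) (r : ℝ), 0 < r →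
          μ (ball x r) ≤ ENNReal.ofReal (Λ * r ^ s)) →
        ∀ (K : EuclideanSpace ℝ (Fin d) → ℂ),
          (∀ x, x ≠ 0 → ‖K x‖ ≤ (‖x‖ ^ s)⁻¹) →
          (∀ x, K (-x) = -K x) →
          ∀ (f φ : EuclideanSpace ℝ (Fin d) → ℝ) (Lf Lφ Mf Mφ δ : ℝ), 0 < δ →
            HasCompactSupport f →
            (∀ x y, |f x - f y| ≤ Lf * ‖x - y‖) → (∀ x, |f x| ≤ Mf) →
            (∀ x y, |φ x - φ y| ≤ Lφ * ‖x - y‖) → (∀ x, |φ x| ≤ Mφ) →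
            ‖∫ x, ∫ y,
                (if x - y = 0 then 0 else
                    K (x - y) * ((1 - (‖x - y‖ / max δ ‖x - y‖) ^ (s + α) : ℝ) : ℂ))
                  * ((((1 : ℝ) / 2) * (f y * φ x - f x * φ y) : ℝ) : ℂ) ∂μ ∂μ‖
              ≤ C₂ * δ * (Lf * Mφ + Mf * Lφ) *
                (μ (tsupport f ∩ cthickening δ (tsupport φ))).toReal := by
  refine ⟨2 * 4 ^ s * Λ, by positivity, ?_⟩
  intro μ hμ K hK _ f φ Lf Lφ Mf Mφ δ hδ hf hLf hMf hLφ hMφ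
  have : Nonempty (Fin d) := ⟨⟨0, by omega⟩⟩
  have := isLocallyFiniteMeasure_of_measure_ball_le hμ
  have hL : 0 ≤ Lf * Mφ + Mf * Lφ := add_nonneg
    (mul_nonneg (nonneg_of_abs_sub_le_mul_norm hLf) ((abs_nonneg _).trans (hMφ 0)))
    (mul_nonneg ((abs_nonneg _).trans (hMf 0)) (nonneg_of_abs_sub_le_mul_norm hLφ))
  have hweight := fun x => lintegral_cutoffWeight_dist_le hs.le hΛ.le hμ x hδ
  change ‖∫ x, ∫ y, localizedKernel K s α δ (x - y) * (skewProduct f φ x y : ℂ) ∂μ ∂μ‖ ≤ _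
  refine (norm_integral_integral_le_of_kernel_bound
    (w := fun x y => cutoffWeight s δ (dist x y))
    ((measurable_cutoffWeight s δ).comp measurable_dist)
    (by positivity) hweight (fun y => by simpa only [dist_comm] using hweight y)
    ((isClosed_tsupport f).measurableSet.inter isClosed_cthickening.measurableSet)
    (hf.isCompact.measure_lt_top.trans_le' (measure_mono Set.inter_subset_left)).ne
    (by positivity : 0 ≤ (Lf * Mφ + Mf * Lφ) / 2) (fun x y => ?_) (fun x y hg => ?_)).trans_eq
    (by ring)
  · exact dist_eq_norm x y ▸
      norm_localizedKernel_mul_le hK (by linarith) (abs_skewProduct_le hLf hMf hLφ hMφ x y)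
  · obtain ⟨hKxy, hH⟩ := mul_ne_zero_iff.mp hg
    exact mem_or_mem_of_skewProduct_ne_zero
      (dist_eq_norm x y ▸ not_lt.mp (mt localizedKernel_eq_zero_of_lt hKxy))
      (Complex.ofReal_ne_zero.mp hH)

/-- For a `Λ`-nice measure `μ`, the localized kernel `K^δ = K − K_δ`, a
compactly supported Lipschitz `f` and bounded Lipschitz `φ`,
`|∬ K^δ(x−y)H_{f,φ}(x,y) dμ dμ| ≤ C₂ δ (‖f‖_Lip‖φ‖_∞ + ‖f‖_∞‖φ‖_Lip) μ(E ∩ F_δ)`,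
where `E = supp f`, `F_δ` is the closed `δ`-neighbourhood of `supp φ`, and `C₂ = C₂(d,s,Λ)`. -/
theorem stmt9 (d : ℕ) (hd : 2 ≤ d) (s α Λ : ℝ) (hs : 0 < s) (hsd : s < d)
    (hα0 : 0 < α) (hα1 : α ≤ 1) (hΛ : 0 < Λ) :
    ∃ C₂ : ℝ, 0 < C₂ ∧
      ∀ (μ : Measure (EuclideanSpace ℝ (Fin d))),
        (∀ (x : EuclideanSpace ℝ (Fin d)) (r : ℝ), 0 < r →
          μ (ball x r) ≤ ENNReal.ofReal (Λ * r ^ s)) →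
        ∀ (K : EuclideanSpace ℝ (Fin d) → ℂ),
          (∀ x, x ≠ 0 → ‖K x‖ ≤ (‖x‖ ^ s)⁻¹) →
          (∀ x, K (-x) = -K x) →
          ∀ (f φ : EuclideanSpace ℝ (Fin d) → ℝ) (Lf Lφ Mf Mφ δ : ℝ), 0 < δ →
            HasCompactSupport f →
            (∀ x y, |f x - f y| ≤ Lf * ‖x - y‖) → (∀ x, |f x| ≤ Mf) →
            (∀ x y, |φ x - φ y| ≤ Lφ * ‖x - y‖) → (∀ x, |φ x| ≤ Mφ) →
            ‖∫ x, ∫ y,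
                (if x - y = 0 then 0 else
                    K (x - y) * ((1 - (‖x - y‖ / max δ ‖x - y‖) ^ (s + α) : ℝ) : ℂ))
                  * ((((1 : ℝ) / 2) * (f y * φ x - f x * φ y) : ℝ) : ℂ) ∂μ ∂μ‖
              ≤ C₂ * δ * (Lf * Mφ + Mf * Lφ) *
                (μ (tsupport f ∩ cthickening δ (tsupport φ))).toReal :=
  stmt9_general d hd s α Λ hs hα0 hΛ
end

section
/- Let μ be a Λ-nice measure on ℝ^d, x ∈ ℝ^d, δ > 0, and suppose r = 5^j δ (j ≥ 0) satisfies μ(B(x, 5^{ℓ+1}δ)) ≥ 5^{s+1} μ(B(x, 5^ℓ δ)) for all 0 ≤ ℓ < j. Then ∫_{B(x,r)} max(δ, |x−y|)^{−s} dμ(y) ≤ C Λ for a constant C depending only on s and d. In particular, for K an s-dimensional CZ kernel with regularizations K_δ, |∫_{B(x,r)} [K_δ(y−x) − K_r(y−x)] dμ(y)| ≤ C Λ. -/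
open Classical MeasureTheory Metric

/-!
Split the ball `B(x, bʲδ)` into the shells where `|x - y|` is comparable to `bˡδ`: there the
integrand is at most `bˢ (bˡδ)⁻ˢ`, so the integral is at most `bˢ ∑ θ_ℓ` with the densities
`θ_ℓ = μ(B(x, bˡδ)) / (bˡδ)ˢ`. Growth of the measure by the factor `b^(s+1)` per scale means
growth of the densities by the factor `b`, so the sum is dominated by its last term `θ_j ≤ Λ`.
Both regularizations of a kernel bounded by `|z|⁻ˢ` are bounded by `max(δ, |z|)⁻ˢ`, which reduces
the second claim to the first.
-/

lemma exists_pow_mul_lt_and_le_mul_max {b δ t : ℝ} (hb : 1 ≤ b) (hδ : 0 ≤ δ) {j : ℕ}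
    (ht : t < b ^ j * δ) : ∃ ℓ ≤ j, t < b ^ ℓ * δ ∧ b ^ ℓ * δ ≤ b * max δ t := by
  have hex : ∃ ℓ, t < b ^ ℓ * δ := ⟨j, ht⟩
  refine ⟨Nat.find hex, Nat.find_min' hex ht, Nat.find_spec hex, ?_⟩
  rcases h : Nat.find hex with _ | m
  · nlinarith [le_max_left δ t]
  · have hm : b ^ m * δ ≤ t := not_lt.mp (Nat.find_min hex (by omega))
    calc b ^ (m + 1) * δ = b * (b ^ m * δ) := by ring
      _ ≤ b * max δ t := mul_le_mul_of_nonneg_left (hm.trans (le_max_right _ _)) (by linarith)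

lemma sum_range_succ_le_of_le_mul_succ {θ : ℕ → ℝ} {q : ℝ} (hθ : ∀ ℓ, 0 ≤ θ ℓ) (hq0 : 0 ≤ q)
    (hq1 : q < 1) {j : ℕ} (hgrow : ∀ ℓ < j, θ ℓ ≤ q * θ (ℓ + 1)) :
    ∑ ℓ ∈ Finset.range (j + 1), θ ℓ ≤ (1 - q)⁻¹ * θ j := by
  have hinv : 1 ≤ (1 - q)⁻¹ := one_le_inv₀ (by linarith) |>.mpr (by linarith)
  induction j with
  | zero => simpa using le_mul_of_one_le_left (hθ 0) hinv
  | succ j ih =>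
    calc ∑ ℓ ∈ Finset.range (j + 2), θ ℓ
        = ∑ ℓ ∈ Finset.range (j + 1), θ ℓ + θ (j + 1) := Finset.sum_range_succ _ _
      _ ≤ (1 - q)⁻¹ * (q * θ (j + 1)) + θ (j + 1) := by
        gcongr
        exact (ih fun ℓ hℓ => hgrow ℓ (by omega)).trans
          (mul_le_mul_of_nonneg_left (hgrow j (by omega)) (by linarith))
      _ = (1 - q)⁻¹ * θ (j + 1) := by field_simp [show 1 - q ≠ 0 by linarith]; ring

lemma div_rpow_le_inv_mul_div_rpow {m m' ρ b s : ℝ} (hρ : 0 < ρ) (hb : 0 < b)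
    (h : b ^ (s + 1) * m ≤ m') : m / ρ ^ s ≤ b⁻¹ * (m' / (b * ρ) ^ s) := by
  calc m / ρ ^ s = b ^ (s + 1) * m / (b ^ (s + 1) * ρ ^ s) := by field_simp
    _ ≤ m' / (b ^ (s + 1) * ρ ^ s) := by gcongr
    _ = b⁻¹ * (m' / (b * ρ) ^ s) := by
      rw [Real.rpow_add_one hb.ne', Real.mul_rpow hb.le hρ.le]; field_simp

section Shells

variable {X : Type*} [PseudoMetricSpace X] {b δ s : ℝ}

lemma ofReal_inv_rpow_max_le_sum_indicator (hb : 1 ≤ b) (hδ : 0 < δ) (hs : 0 ≤ s) {x y : X}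
    {j : ℕ} (hy : y ∈ ball x (b ^ j * δ)) :
    ENNReal.ofReal ((max δ (dist x y) ^ s)⁻¹) ≤ ∑ ℓ ∈ Finset.range (j + 1),
      (ball x (b ^ ℓ * δ)).indicator (fun _ => ENNReal.ofReal (b ^ s * ((b ^ ℓ * δ) ^ s)⁻¹)) y := by
  rw [mem_ball'] at hy
  obtain ⟨ℓ, hℓj, hyℓ, hscale⟩ := exists_pow_mul_lt_and_le_mul_max hb hδ.le hy
  have hb0 : 0 < b := by linarith
  have hM : 0 < max δ (dist x y) := lt_max_of_lt_left hδ
  have hreal : (max δ (dist x y) ^ s)⁻¹ ≤ b ^ s * ((b ^ ℓ * δ) ^ s)⁻¹ := by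
    calc (max δ (dist x y) ^ s)⁻¹ = b ^ s * ((b * max δ (dist x y)) ^ s)⁻¹ := by
          rw [Real.mul_rpow hb0.le hM.le]; field_simp
      _ ≤ b ^ s * ((b ^ ℓ * δ) ^ s)⁻¹ := by gcongr
  calc ENNReal.ofReal ((max δ (dist x y) ^ s)⁻¹)
      ≤ (ball x (b ^ ℓ * δ)).indicator (fun _ => ENNReal.ofReal (b ^ s * ((b ^ ℓ * δ) ^ s)⁻¹)) y := by
        rw [Set.indicator_of_mem (mem_ball'.mpr hyℓ)]
        exact ENNReal.ofReal_le_ofReal hreal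
    _ ≤ _ := Finset.single_le_sum (f := fun ℓ => (ball x (b ^ ℓ * δ)).indicator
          (fun _ => ENNReal.ofReal (b ^ s * ((b ^ ℓ * δ) ^ s)⁻¹)) y)
        (fun _ _ => zero_le) (Finset.mem_range.mpr (by omega))

variable [MeasurableSpace X] [OpensMeasurableSpace X] (μ : Measure X)

lemma setLIntegral_ball_inv_rpow_max_le_sum (hb : 1 ≤ b) (hδ : 0 < δ) (hs : 0 ≤ s) (x : X)
    (j : ℕ) :
    ∫⁻ y in ball x (b ^ j * δ), ENNReal.ofReal ((max δ (dist x y) ^ s)⁻¹) ∂μ ≤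
      ∑ ℓ ∈ Finset.range (j + 1),
        ENNReal.ofReal (b ^ s * ((b ^ ℓ * δ) ^ s)⁻¹) * μ (ball x (b ^ ℓ * δ)) := by
  calc ∫⁻ y in ball x (b ^ j * δ), ENNReal.ofReal ((max δ (dist x y) ^ s)⁻¹) ∂μ
      ≤ ∫⁻ y in ball x (b ^ j * δ), ∑ ℓ ∈ Finset.range (j + 1), (ball x (b ^ ℓ * δ)).indicator
          (fun _ => ENNReal.ofReal (b ^ s * ((b ^ ℓ * δ) ^ s)⁻¹)) y ∂μ :=
        setLIntegral_mono' measurableSet_ball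
          fun y hy => ofReal_inv_rpow_max_le_sum_indicator hb hδ hs hy
    _ ≤ ∫⁻ y, ∑ ℓ ∈ Finset.range (j + 1), (ball x (b ^ ℓ * δ)).indicator
          (fun _ => ENNReal.ofReal (b ^ s * ((b ^ ℓ * δ) ^ s)⁻¹)) y ∂μ :=
        setLIntegral_le_lintegral _ _
    _ = _ := by
        rw [lintegral_finsetSum _ fun ℓ _ => measurable_const.indicator measurableSet_ball]
        simp only [lintegral_indicator_const measurableSet_ball]

theorem setLIntegral_ball_inv_rpow_max_le_of_growth {Λ : ℝ} (hΛ : 0 ≤ Λ) (hs : 0 ≤ s)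
    (hb : 1 < b) (hδ : 0 < δ) {x : X} {j : ℕ}
    (hμ : μ (ball x (b ^ j * δ)) ≤ ENNReal.ofReal (Λ * (b ^ j * δ) ^ s))
    (hgrow : ∀ ℓ < j, ENNReal.ofReal (b ^ (s + 1)) * μ (ball x (b ^ ℓ * δ)) ≤
      μ (ball x (b ^ (ℓ + 1) * δ))) :
    ∫⁻ y in ball x (b ^ j * δ), ENNReal.ofReal ((max δ (dist x y) ^ s)⁻¹) ∂μ ≤
      ENNReal.ofReal (b ^ s * (1 - b⁻¹)⁻¹ * Λ) := by
  set θ : ℕ → ℝ := fun ℓ => (μ (ball x (b ^ ℓ * δ))).toReal / (b ^ ℓ * δ) ^ s with hθ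
  have hb0 : 0 < b := by linarith
  have hfin : ∀ ℓ ≤ j, μ (ball x (b ^ ℓ * δ)) ≠ ⊤ := fun ℓ hℓ =>
    ne_top_of_le_ne_top (hμ.trans_lt ENNReal.ofReal_lt_top).ne
      (measure_mono (ball_subset_ball (by gcongr; exact hb.le)))
  have hθgrow : ∀ ℓ < j, θ ℓ ≤ b⁻¹ * θ (ℓ + 1) := by
    intro ℓ hℓ
    have h := ENNReal.toReal_mono (hfin (ℓ + 1) hℓ) (hgrow ℓ hℓ)
    rw [ENNReal.toReal_mul, ENNReal.toReal_ofReal (by positivity)] at h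
    simpa only [hθ, pow_succ', mul_assoc] using div_rpow_le_inv_mul_div_rpow (by positivity) hb0 h
  have hθj : θ j ≤ Λ :=
    div_le_of_le_mul₀ (by positivity) hΛ (ENNReal.toReal_le_of_le_ofReal (by positivity) hμ)
  have hθsum : ∑ ℓ ∈ Finset.range (j + 1), θ ℓ ≤ (1 - b⁻¹)⁻¹ * Λ := by
    refine (sum_range_succ_le_of_le_mul_succ (fun ℓ => by positivity) (by positivity)
      (inv_lt_one_of_one_lt₀ hb) hθgrow).trans ?_
    have : 0 < 1 - b⁻¹ := sub_pos.mpr (inv_lt_one_of_one_lt₀ hb)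
    gcongr
  calc ∫⁻ y in ball x (b ^ j * δ), ENNReal.ofReal ((max δ (dist x y) ^ s)⁻¹) ∂μ
      ≤ ∑ ℓ ∈ Finset.range (j + 1),
          ENNReal.ofReal (b ^ s * ((b ^ ℓ * δ) ^ s)⁻¹) * μ (ball x (b ^ ℓ * δ)) :=
        setLIntegral_ball_inv_rpow_max_le_sum μ hb.le hδ hs x j
    _ = ∑ ℓ ∈ Finset.range (j + 1), ENNReal.ofReal (b ^ s * θ ℓ) := by
        refine Finset.sum_congr rfl fun ℓ hℓ => ?_
        rw [← ENNReal.ofReal_toReal (hfin ℓ (by simpa [Nat.lt_succ_iff] using hℓ)),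
          ← ENNReal.ofReal_mul (by positivity)]
        congr 1
        ring
    _ = ENNReal.ofReal (b ^ s * ∑ ℓ ∈ Finset.range (j + 1), θ ℓ) := by
        rw [Finset.mul_sum, ENNReal.ofReal_sum_of_nonneg fun ℓ _ => by positivity]
    _ ≤ ENNReal.ofReal (b ^ s * (1 - b⁻¹)⁻¹ * Λ) := by
        rw [mul_assoc]
        gcongr

end Shells

section Kernel

variable {E : Type*} [NormedAddCommGroup E] [DecidableEq E] {K : E → ℂ} {s α δ ρ : ℝ}

noncomputable def regularizedKernel (K : E → ℂ) (s α δ : ℝ) (z : E) : ℂ :=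
  if z = 0 then 0 else K z * (((‖z‖ / max δ ‖z‖) ^ (s + α) : ℝ) : ℂ)

lemma norm_regularizedKernel_le (hK : ∀ z, z ≠ 0 → ‖K z‖ ≤ (‖z‖ ^ s)⁻¹) (hs : 0 ≤ s)
    (hα : 0 ≤ α) (hδ : 0 < δ) (hδρ : δ ≤ ρ) (z : E) :
    ‖regularizedKernel K s α ρ z‖ ≤ (max δ ‖z‖ ^ s)⁻¹ := by
  have hMδ : 0 < max δ ‖z‖ := lt_max_of_lt_left hδ
  by_cases hz : z = 0
  · simp only [regularizedKernel, hz, if_true, norm_zero]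
    positivity
  have ht : 0 < ‖z‖ := norm_pos_iff.mpr hz
  have hM : 0 < max ρ ‖z‖ := lt_max_of_lt_left (hδ.trans_le hδρ)
  have hratio : (‖z‖ / max ρ ‖z‖) ^ (s + α) ≤ (‖z‖ / max ρ ‖z‖) ^ s :=
    Real.rpow_le_rpow_of_exponent_ge (by positivity) (div_le_one_of_le₀ (le_max_right _ _) hM.le)
      (by linarith)
  rw [regularizedKernel, if_neg hz, norm_mul, Complex.norm_real,
    Real.norm_of_nonneg (by positivity)]
  calc ‖K z‖ * (‖z‖ / max ρ ‖z‖) ^ (s + α) ≤ (‖z‖ ^ s)⁻¹ * (‖z‖ / max ρ ‖z‖) ^ s :=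
        mul_le_mul (hK z hz) hratio (by positivity) (by positivity)
    _ = (max ρ ‖z‖ ^ s)⁻¹ := by
        rw [Real.div_rpow ht.le hM.le]; field_simp
    _ ≤ (max δ ‖z‖ ^ s)⁻¹ := by gcongr

variable [MeasurableSpace E] {μ : Measure E}

lemma norm_setIntegral_regularizedKernel_sub_le (hK : ∀ z, z ≠ 0 → ‖K z‖ ≤ (‖z‖ ^ s)⁻¹)
    (hs : 0 ≤ s) (hα : 0 ≤ α) (hδ : 0 < δ) (hδρ : δ ≤ ρ) {S : Set E} {x : E} {B : ℝ}
    (hB0 : 0 ≤ B) (hB : ∫⁻ y in S, ENNReal.ofReal ((max δ ‖x - y‖ ^ s)⁻¹) ∂μ ≤ ENNReal.ofReal B) :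
    ‖∫ y in S, (regularizedKernel K s α δ (y - x) - regularizedKernel K s α ρ (y - x)) ∂μ‖ ≤
      2 * B := by
  have hpt : ∀ y, ‖regularizedKernel K s α δ (y - x) - regularizedKernel K s α ρ (y - x)‖ ≤
      2 * (max δ ‖x - y‖ ^ s)⁻¹ := fun y => by
    rw [norm_sub_rev x y, two_mul]
    exact (norm_sub_le _ _).trans (add_le_add (norm_regularizedKernel_le hK hs hα hδ le_rfl _)
      (norm_regularizedKernel_le hK hs hα hδ hδρ _))
  have hlint : ∫⁻ y in S, ENNReal.ofReal
      ‖regularizedKernel K s α δ (y - x) - regularizedKernel K s α ρ (y - x)‖ ∂μ ≤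
      ENNReal.ofReal (2 * B) := by
    calc _ ≤ ∫⁻ y in S, ENNReal.ofReal 2 * ENNReal.ofReal ((max δ ‖x - y‖ ^ s)⁻¹) ∂μ :=
          lintegral_mono fun y => by
            rw [← ENNReal.ofReal_mul zero_le_two]; exact ENNReal.ofReal_le_ofReal (hpt y)
      _ ≤ ENNReal.ofReal 2 * ENNReal.ofReal B := by
          rw [lintegral_const_mul' _ _ ENNReal.ofReal_ne_top]; gcongr
      _ = ENNReal.ofReal (2 * B) := (ENNReal.ofReal_mul zero_le_two).symm
  exact (norm_integral_le_lintegral_norm _).trans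
    (ENNReal.toReal_le_of_le_ofReal (by positivity) hlint)

end Kernel

theorem stmt19_general (d : ℕ) (s α : ℝ) (hs : 0 < s)
    (hα0 : 0 < α) :
    ∃ C : ℝ, 0 < C ∧
      ∀ (Λ : ℝ), 0 < Λ →
        ∀ (μ : Measure (EuclideanSpace ℝ (Fin d))),
          (∀ (y : EuclideanSpace ℝ (Fin d)) (ρ : ℝ), 0 < ρ →
            μ (ball y ρ) ≤ ENNReal.ofReal (Λ * ρ ^ s)) →
          ∀ (x : EuclideanSpace ℝ (Fin d)) (δ : ℝ) (j : ℕ), 0 < δ →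
            (∀ ℓ : ℕ, ℓ < j →
              ENNReal.ofReal ((5 : ℝ) ^ (s + 1)) * μ (ball x ((5 : ℝ) ^ ℓ * δ))
                ≤ μ (ball x ((5 : ℝ) ^ (ℓ + 1) * δ))) →
            (∫⁻ y in ball x ((5 : ℝ) ^ j * δ),
                ENNReal.ofReal (((max δ ‖x - y‖) ^ s)⁻¹) ∂μ ≤ ENNReal.ofReal (C * Λ))
            ∧ ∀ (K : EuclideanSpace ℝ (Fin d) → ℂ),
                (∀ z, z ≠ 0 → ‖K z‖ ≤ (‖z‖ ^ s)⁻¹) →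
                (∀ z, K (-z) = -K z) →
                ‖∫ y in ball x ((5 : ℝ) ^ j * δ),
                    ((if y - x = 0 then 0 else
                        K (y - x) * (((‖y - x‖ / max δ ‖y - x‖) ^ (s + α) : ℝ) : ℂ))
                      - (if y - x = 0 then 0 else
                        K (y - x) *
                          (((‖y - x‖ / max ((5 : ℝ) ^ j * δ) ‖y - x‖) ^ (s + α) : ℝ) : ℂ))) ∂μ‖
                  ≤ C * Λ := by
  set C₀ : ℝ := (5 : ℝ) ^ s * (1 - 5⁻¹)⁻¹
  have hC₀ : 0 < C₀ := by positivity
  refine ⟨2 * C₀, by positivity, fun Λ hΛ μ hμ x δ j hδ hgrow => ?_⟩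
  have hbound : ∫⁻ y in ball x ((5 : ℝ) ^ j * δ), ENNReal.ofReal ((max δ ‖x - y‖ ^ s)⁻¹) ∂μ ≤
      ENNReal.ofReal (C₀ * Λ) := by
    simpa only [dist_eq_norm] using setLIntegral_ball_inv_rpow_max_le_of_growth μ hΛ.le hs.le
      (by norm_num) hδ (hμ x _ (by positivity)) hgrow
  refine ⟨hbound.trans (ENNReal.ofReal_le_ofReal (by nlinarith)), fun K hK _ => ?_⟩
  rw [mul_assoc]
  exact norm_setIntegral_regularizedKernel_sub_le (ρ := (5 : ℝ) ^ j * δ) hK hs.le hα0.le hδ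
    (le_mul_of_one_le_left hδ.le (one_le_pow₀ (by norm_num))) (by positivity) hbound

/-- For a `Λ`-nice `μ`, if `r = 5^j δ` and
`μ(B(x,5^{ℓ+1}δ)) ≥ 5^{s+1}μ(B(x,5^ℓ δ))` for all `0 ≤ ℓ < j`, then
`∫_{B(x,r)} max(δ,|x−y|)^{−s} dμ(y) ≤ CΛ` with `C = C(s,d)`; in particular, for an
`s`-dimensional CZ kernel `K` with regularizations `K_δ`,
`|∫_{B(x,r)} [K_δ(y−x) − K_r(y−x)] dμ(y)| ≤ CΛ`. -/
theorem stmt19 (d : ℕ) (hd : 2 ≤ d) (s α : ℝ) (hs : 0 < s) (hsd : s < d)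
    (hα0 : 0 < α) (hα1 : α ≤ 1) :
    ∃ C : ℝ, 0 < C ∧
      ∀ (Λ : ℝ), 0 < Λ →
        ∀ (μ : Measure (EuclideanSpace ℝ (Fin d))),
          (∀ (y : EuclideanSpace ℝ (Fin d)) (ρ : ℝ), 0 < ρ →
            μ (ball y ρ) ≤ ENNReal.ofReal (Λ * ρ ^ s)) →
          ∀ (x : EuclideanSpace ℝ (Fin d)) (δ : ℝ) (j : ℕ), 0 < δ →
            (∀ ℓ : ℕ, ℓ < j →
              ENNReal.ofReal ((5 : ℝ) ^ (s + 1)) * μ (ball x ((5 : ℝ) ^ ℓ * δ))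
                ≤ μ (ball x ((5 : ℝ) ^ (ℓ + 1) * δ))) →
            (∫⁻ y in ball x ((5 : ℝ) ^ j * δ),
                ENNReal.ofReal (((max δ ‖x - y‖) ^ s)⁻¹) ∂μ ≤ ENNReal.ofReal (C * Λ))
            ∧ ∀ (K : EuclideanSpace ℝ (Fin d) → ℂ),
                (∀ z, z ≠ 0 → ‖K z‖ ≤ (‖z‖ ^ s)⁻¹) →
                (∀ z, K (-z) = -K z) →
                ‖∫ y in ball x ((5 : ℝ) ^ j * δ),
                    ((if y - x = 0 then 0 else
                        K (y - x) * (((‖y - x‖ / max δ ‖y - x‖) ^ (s + α) : ℝ) : ℂ))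
                      - (if y - x = 0 then 0 else
                        K (y - x) *
                          (((‖y - x‖ / max ((5 : ℝ) ^ j * δ) ‖y - x‖) ^ (s + α) : ℝ) : ℂ))) ∂μ‖
                  ≤ C * Λ :=
  stmt19_general d s α hs hα0
end
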